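/- Assume ∫_{(0,1]} z^{α/d} λ(dz) < ∞, and suppose there is a slowly varying function l at infinity such that λ̄(r) = l(r)/r^{α/d} for all r ≥ 1. Then, as r → ∞, τ̄(r) ∼ r^{-α/d} · ( ∫_{(0,1]} z^{α/d} λ(dz) + λ̄(1) + (α/d) ∫_{1}^{r} l(u)/u du ). In particular, if ∫_{1}^{∞} l(u)/u du < ∞ then τ̄(r) ∼ r^{-α/d}( ∫_{(0,1]} z^{α/d} λ(dz) + λ̄(1) + (α/d)∫_{1}^{∞} l(u)/u du ), while if ∫_{1}^{∞} l(u)/u du = ∞ then τ̄(r) ∼ (α/d) r^{-α/d} ∫_{1}^{r} l(u)/u du. -/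

import Mathlib

open MeasureTheory Set Filter Topology
open scoped ENNReal NNReal

/-- `tauBar d α t lam r = τ̄(r)`, where
`τ(B) = (Leb ⊗ λ)({(s,z) ∈ (0,t] × (0,∞) : z·s^{-d/α} ∈ B})` and `τ̄(r) = τ((r,∞))`. -/
noncomputable def tauBar (d : ℕ) (α t : ℝ) (lam : MeasureTheory.Measure ℝ) (r : ℝ) : ℝ≥0∞ :=
  ((MeasureTheory.volume.restrict (Set.Ioc (0:ℝ) t)).prod (lam.restrict (Set.Ioi (0:ℝ))))
    {p : ℝ × ℝ | r < p.2 * p.1 ^ (-((d : ℝ) / α))}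

/-- `l : (0,∞) → (0,∞)` is slowly varying at infinity if `l(cr)/l(r) → 1` as `r → ∞`
for every `c > 0`. -/
def SlowlyVarying (l : ℝ → ℝ) : Prop :=
  ∀ c : ℝ, 0 < c → Filter.Tendsto (fun r => l (c * r) / l r) Filter.atTop (nhds 1)

/-! Slicing the product measure over `z` gives `τ̄(r) = ∫ min ((z / r) ^ β, t) dλ(z)` with
`β = α / d`, that is `r ^ (-β) * ∫ min (z, R) ^ β dλ(z)` with `R = t ^ (1 / β) * r`. The layer-cake
formula turns this into `r ^ (-β) * (∫_{(0,1]} z ^ β dλ + λ̄(1) + β ∫_1^R u ^ (β - 1) λ̄(u) du)`, and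
`u ^ (β - 1) λ̄(u) = l(u) / u`. Finally `R` may be replaced by `r`, because
`K + β ∫_1^r l(u) / u du` is itself slowly varying. -/

theorem le_pow_mul_of_forall_le_mul {D : ℝ → ℝ} {c q M : ℝ} (hc : 1 ≤ c) (hM : 0 ≤ M)
    (hq : 0 ≤ q) (h : ∀ r, M ≤ r → D (c * r) ≤ q * D r) (k : ℕ) {r : ℝ} (hr : M ≤ r) :
    D (c ^ k * r) ≤ q ^ k * D r := by
  induction k with
  | zero => simp
  | succ k ih =>
    have hk : M ≤ c ^ k * r := hr.trans (le_mul_of_one_le_left (hM.trans hr) (one_le_pow₀ hc))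
    calc D (c ^ (k + 1) * r) = D (c * (c ^ k * r)) := by rw [pow_succ', mul_assoc]
      _ ≤ q * D (c ^ k * r) := h _ hk
      _ ≤ q * (q ^ k * D r) := mul_le_mul_of_nonneg_left ih hq
      _ = q ^ (k + 1) * D r := by ring

section Increments

variable {F : ℝ → ℝ} {a c : ℝ}

theorem sub_nonneg_of_monotoneOn (ha : 0 ≤ a) (hc : 1 ≤ c) (hmono : MonotoneOn F (Ici a))
    {r : ℝ} (hr : a ≤ r) : 0 ≤ F (c * r) - F r :=
  have hcr : r ≤ c * r := le_mul_of_one_le_left (ha.trans hr) hc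
  sub_nonneg.2 (hmono hr (hr.trans hcr) hcr)

/-- With `D r = F (c * r) - F r`: the `n` increments `D (c ^ i * r)`, `i < n`, below
`s = c ^ n * r` each exceed `D s / (1 + ε) ^ n` and add up to at most `F s`; choosing
`(1 + ε) ^ n = 2` gives `D s ≤ 2 / n * F s`. -/
theorem eventually_sub_le_two_div_mul (ha : 0 ≤ a) (hc : 1 ≤ c) (hmono : MonotoneOn F (Ici a))
    (hpos : ∀ x, a ≤ x → 0 < F x)
    (hinc : ∀ ε > 0, ∀ᶠ r in atTop, F (c * (c * r)) - F (c * r) ≤ (1 + ε) * (F (c * r) - F r))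
    {n : ℕ} (hn : 0 < n) : ∀ᶠ s in atTop, F (c * s) - F s ≤ 2 / n * F s := by
  set D : ℝ → ℝ := fun r => F (c * r) - F r
  set q : ℝ := 2 ^ (n : ℝ)⁻¹ with hq
  have hq1 : 1 < q := Real.one_lt_rpow (by norm_num) (by positivity)
  have hqn : q ^ n = 2 := by
    rw [hq, ← Real.rpow_natCast, ← Real.rpow_mul (by norm_num),
      inv_mul_cancel₀ (by exact_mod_cast hn.ne'), Real.rpow_one]
  obtain ⟨M, hM⟩ := (hinc (q - 1) (by linarith)).exists_forall_of_atTop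
  simp only [add_sub_cancel] at hM
  set M' := max M a
  have hM'0 : 0 ≤ M' := ha.trans (le_max_right _ _)
  have hiter := le_pow_mul_of_forall_le_mul (D := D) (q := q) hc hM'0 (by linarith)
    (fun r hr => hM r ((le_max_left _ _).trans hr))
  filter_upwards [eventually_ge_atTop (c ^ n * M')] with s hs
  have hcn : 0 < c ^ n := by positivity
  set r := s / c ^ n
  have hr : M' ≤ r := (le_div_iff₀ hcn).2 (by linarith)
  have hrs : s = c ^ n * r := (mul_div_cancel₀ s hcn.ne').symm
  have hcir : ∀ i : ℕ, M' ≤ c ^ i * r := fun i =>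
    hr.trans (le_mul_of_one_le_left (hM'0.trans hr) (one_le_pow₀ hc))
  have hstep : ∀ i ∈ Finset.range n, D s ≤ 2 * D (c ^ i * r) := by
    intro i hi
    calc D s = D (c ^ (n - i) * (c ^ i * r)) := by
          rw [hrs, ← mul_assoc, ← pow_add, Nat.sub_add_cancel (Finset.mem_range.1 hi).le]
      _ ≤ q ^ (n - i) * D (c ^ i * r) := hiter _ (hcir i)
      _ ≤ 2 * D (c ^ i * r) := by
          rw [← hqn]
          exact mul_le_mul_of_nonneg_right (pow_le_pow_right₀ hq1.le (Nat.sub_le n i))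
            (sub_nonneg_of_monotoneOn ha hc hmono ((le_max_right _ _).trans (hcir i)))
  have htel : ∑ i ∈ Finset.range n, D (c ^ i * r) = F s - F r := by
    have := Finset.sum_range_sub (fun i => F (c ^ i * r)) n
    simp only [pow_succ', mul_assoc, pow_zero, one_mul] at this
    rw [hrs, ← this]
  have hsum := Finset.sum_le_sum hstep
  rw [Finset.sum_const, Finset.card_range, nsmul_eq_mul, ← Finset.mul_sum, htel] at hsum
  have hFr := hpos r ((le_max_right _ _).trans hr)
  rw [div_mul_eq_mul_div, le_div_iff₀ (by exact_mod_cast hn)]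
  nlinarith

theorem tendsto_comp_mul_div_self_of_increment_le (ha : 0 ≤ a) (hc : 1 ≤ c)
    (hmono : MonotoneOn F (Ici a)) (hpos : ∀ x, a ≤ x → 0 < F x)
    (hinc : ∀ ε > 0, ∀ᶠ r in atTop,
      F (c * (c * r)) - F (c * r) ≤ (1 + ε) * (F (c * r) - F r)) :
    Tendsto (fun r => F (c * r) / F r) atTop (𝓝 1) := by
  have hratio : Tendsto (fun s => (F (c * s) - F s) / F s) atTop (𝓝 0) := by
    refine tendsto_order.2 ⟨fun b hb => ?_, fun b hb => ?_⟩
    · filter_upwards [eventually_ge_atTop a] with s hs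
      exact hb.trans_le (div_nonneg (sub_nonneg_of_monotoneOn ha hc hmono hs) (hpos s hs).le)
    · obtain ⟨n, hn⟩ := exists_nat_gt (2 / b)
      have hn0 : (0 : ℝ) < n := (by positivity : (0 : ℝ) < 2 / b).trans hn
      filter_upwards [eventually_sub_le_two_div_mul ha hc hmono hpos hinc
        (by exact_mod_cast hn0), eventually_ge_atTop a] with s hs hsa
      calc (F (c * s) - F s) / F s ≤ 2 / n := (div_le_iff₀ (hpos s hsa)).2 hs
        _ < b := (div_lt_iff₀ hn0).2 (by rwa [div_lt_iff₀ hb, mul_comm] at hn)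
  have h1 := hratio.const_add 1
  rw [add_zero] at h1
  refine h1.congr' ?_
  filter_upwards [eventually_ge_atTop a] with s hs
  field_simp [(hpos s hs).ne']
  ring

end Increments

theorem SlowlyVarying.of_one_le {f : ℝ → ℝ}
    (h : ∀ c, 1 ≤ c → Tendsto (fun r => f (c * r) / f r) atTop (𝓝 1)) : SlowlyVarying f := by
  intro c hc
  rcases le_or_gt 1 c with hc1 | hc1
  · exact h c hc1
  have hinv := ((h c⁻¹ (one_le_inv₀ hc |>.2 hc1.le)).comp
    (tendsto_id.const_mul_atTop hc)).inv₀ one_ne_zero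
  rw [inv_one] at hinv
  refine hinv.congr fun r => ?_
  simp [inv_mul_cancel_left₀ hc.ne']

theorem integral_comp_mul_le {g : ℝ → ℝ} {c q r : ℝ} (hc : 0 < c) (hr : r ≤ c * r)
    (hgr : IntervalIntegrable g volume r (c * r))
    (hgcr : IntervalIntegrable g volume (c * r) (c * (c * r)))
    (hle : ∀ v ∈ Icc r (c * r), g (c * v) ≤ q / c * g v) :
    ∫ u in c * r..c * (c * r), g u ≤ q * ∫ u in r..c * r, g u := by
  have hcomp : IntervalIntegrable (fun v => g (c * v)) volume r (c * r) := by
    simpa [mul_div_cancel_left₀ _ hc.ne'] using hgcr.comp_mul_left (c := c)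
  calc ∫ u in c * r..c * (c * r), g u = c * ∫ v in r..c * r, g (c * v) := by
        rw [intervalIntegral.integral_comp_mul_left g hc.ne', smul_eq_mul,
          mul_inv_cancel_left₀ hc.ne']
    _ ≤ c * ∫ v in r..c * r, q / c * g v := by
        gcongr
        exact intervalIntegral.integral_mono_on hr hcomp (hgr.const_mul _) hle
    _ = q * ∫ u in r..c * r, g u := by
        rw [intervalIntegral.integral_const_mul, ← mul_assoc, mul_div_cancel₀ _ hc.ne']

theorem SlowlyVarying.eventually_div_comp_mul_le {l : ℝ → ℝ} (hl : SlowlyVarying l)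
    (hl_pos : ∀ x, 0 < x → 0 < l x) {c : ℝ} (hc : 0 < c) {ε : ℝ} (hε : 0 < ε) :
    ∀ᶠ v in atTop, l (c * v) / (c * v) ≤ (1 + ε) / c * (l v / v) := by
  filter_upwards [(hl c hc).eventually (eventually_le_nhds (lt_add_of_pos_right 1 hε)),
    eventually_gt_atTop 0] with v hlv hv0
  rw [div_le_iff₀ (hl_pos v hv0)] at hlv
  calc l (c * v) / (c * v) = l (c * v) / c / v := by rw [div_div]
    _ ≤ (1 + ε) * l v / c / v := by gcongr
    _ = (1 + ε) / c * (l v / v) := by ring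

theorem SlowlyVarying.const_add_mul_integral {l : ℝ → ℝ} (hl : SlowlyVarying l)
    (hl_pos : ∀ x, 0 < x → 0 < l x)
    (hint : ∀ b, IntegrableOn (fun u => l u / u) (Icc 1 b)) {K β : ℝ} (hK : 0 < K)
    (hβ : 0 ≤ β) : SlowlyVarying (fun r => K + β * ∫ u in (1 : ℝ)..r, l u / u) := by
  set g : ℝ → ℝ := fun u => l u / u
  have hint' : ∀ x y, 1 ≤ x → 1 ≤ y → IntervalIntegrable g volume x y := fun x y hx hy =>
    intervalIntegrable_iff.2 ((hint (max x y)).mono_set (Ioc_subset_Icc_self.trans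
      (Icc_subset_Icc (le_min hx hy) le_rfl)))
  have hg0 : ∀ u, 0 < u → 0 ≤ g u := fun u hu => div_nonneg (hl_pos u hu).le hu.le
  have hJ0 : ∀ x, 1 ≤ x → 0 ≤ ∫ u in (1 : ℝ)..x, g u := fun x hx =>
    intervalIntegral.integral_nonneg hx fun u hu => hg0 u (one_pos.trans_le hu.1)
  refine SlowlyVarying.of_one_le fun c hc => ?_
  have hc0 : 0 < c := one_pos.trans_le hc
  refine tendsto_comp_mul_div_self_of_increment_le (F := fun r => K + β * ∫ u in (1 : ℝ)..r, g u)
    zero_le_one hc (fun x hx y hy hxy => ?_) (fun x hx => by have := hJ0 x hx; positivity)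
    fun ε hε => ?_
  · have := intervalIntegral.integral_mono_interval le_rfl (hx : (1 : ℝ) ≤ x) hxy
      (ae_restrict_of_forall_mem measurableSet_Ioc fun u hu => hg0 u (one_pos.trans hu.1))
      (hint' 1 y le_rfl (hx.trans hxy))
    dsimp only
    gcongr
  obtain ⟨M, hM⟩ := (hl.eventually_div_comp_mul_le hl_pos hc0 hε).exists_forall_of_atTop
  filter_upwards [eventually_ge_atTop (max M 1)] with r hr
  have hr1 : 1 ≤ r := (le_max_right _ _).trans hr
  have hcr : r ≤ c * r := le_mul_of_one_le_left (zero_le_one.trans hr1) hc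
  have hccr : c * r ≤ c * (c * r) := le_mul_of_one_le_left (zero_le_one.trans (hr1.trans hcr)) hc
  have hcr1 : 1 ≤ c * r := hr1.trans hcr
  have hccr1 : 1 ≤ c * (c * r) := hcr1.trans hccr
  simp only [add_sub_add_left_eq_sub, ← mul_sub,
    intervalIntegral.integral_interval_sub_left (hint' 1 _ le_rfl hccr1) (hint' 1 _ le_rfl hcr1),
    intervalIntegral.integral_interval_sub_left (hint' 1 _ le_rfl hcr1) (hint' 1 _ le_rfl hr1)]
  rw [mul_left_comm (1 + ε)]
  exact mul_le_mul_of_nonneg_left (integral_comp_mul_le hc0 hcr (hint' _ _ hr1 hcr1)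
    (hint' _ _ hcr1 hccr1) fun v hv => hM v (((le_max_left _ _).trans hr).trans hv.1)) hβ

theorem tendsto_intervalIntegral_atTop_of_not_integrableOn {g : ℝ → ℝ} {a : ℝ}
    (hg0 : ∀ u, a ≤ u → 0 ≤ g u) (hint : ∀ b, IntegrableOn g (Icc a b))
    (hni : ¬ IntegrableOn g (Ioi a)) : Tendsto (fun r => ∫ u in a..r, g u) atTop atTop := by
  have hint' : ∀ b, a ≤ b → IntervalIntegrable g volume a b := fun b hb =>
    (intervalIntegrable_iff_integrableOn_Ioc_of_le hb).2 ((hint b).mono_set Ioc_subset_Icc_self)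
  refine tendsto_atTop_atTop.2 fun N => ?_
  obtain ⟨x, hx, hNx⟩ : ∃ x, a ≤ x ∧ N ≤ ∫ u in a..x, g u := by
    by_contra! hbdd
    refine hni (integrableOn_Ioi_of_intervalIntegral_norm_bounded N a
      (fun b => (hint b).mono_set Ioc_subset_Icc_self) tendsto_id ?_)
    filter_upwards [eventually_ge_atTop a] with y hy
    rw [intervalIntegral.integral_congr fun u hu => Real.norm_of_nonneg (hg0 u (by
      rw [uIcc_of_le hy] at hu; exact hu.1))]
    exact (hbdd y hy).le
  refine ⟨x, fun y hy => hNx.trans (intervalIntegral.integral_mono_interval le_rfl hx hy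
    (ae_restrict_of_forall_mem measurableSet_Ioc fun u hu => hg0 u hu.1.le)
    (hint' y (hx.trans hy)))⟩

theorem lintegral_Ioi_min_rpow (μ : Measure ℝ) {R β : ℝ} (hR : 0 < R) (hβ : 0 < β) :
    ∫⁻ z in Ioi 0, ENNReal.ofReal (min z R ^ β) ∂μ
      = ENNReal.ofReal β * ∫⁻ u in Ioo 0 R, μ (Ioi u) * ENNReal.ofReal (u ^ (β - 1)) := by
  rw [lintegral_rpow_eq_lintegral_meas_lt_mul _
    (ae_restrict_of_forall_mem measurableSet_Ioi fun z hz => le_min (le_of_lt hz) hR.le)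
    (by fun_prop) hβ]
  set φ := fun u => μ.restrict (Ioi 0) {z | u < min z R} * ENNReal.ofReal (u ^ (β - 1))
  have hbelow : EqOn φ (fun u => μ (Ioi u) * ENNReal.ofReal (u ^ (β - 1))) (Ioo 0 R) := by
    intro u hu
    have hset : {z | u < min z R} ∩ Ioi 0 = Ioi u := by
      ext z
      simp only [mem_inter_iff, mem_ofPred_eq, lt_min_iff, mem_Ioi]
      exact ⟨fun h => h.1.1, fun h => ⟨⟨h, hu.2⟩, hu.1.trans h⟩⟩
    have hm : MeasurableSet {z : ℝ | u < min z R} := measurableSet_lt measurable_const (by fun_prop)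
    simp only [φ, Measure.restrict_apply hm, hset]
  have habove : EqOn φ (fun _ => 0) (Ici R) := by
    intro u hu
    have hset : {z | u < min z R} = ∅ :=
      eq_empty_of_forall_notMem fun z hz => not_le.2 (lt_min_iff.1 hz).2 (mem_Ici.1 hu)
    simp only [φ, hset, measure_empty, zero_mul]
  rw [← Ioo_union_Ici_eq_Ioi hR,
    lintegral_union measurableSet_Ici (disjoint_left.2 fun _ h h' => not_le.2 h.2 h'),
    setLIntegral_congr_fun measurableSet_Ioo hbelow,
    setLIntegral_congr_fun measurableSet_Ici habove, lintegral_zero, add_zero]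

theorem lintegral_Ioi_min_rpow_eq_add (μ : Measure ℝ) {R β : ℝ} (hR : 1 ≤ R) (hβ : 0 < β) :
    ∫⁻ z in Ioi 0, ENNReal.ofReal (min z R ^ β) ∂μ
      = ∫⁻ z in Ioc 0 1, ENNReal.ofReal (z ^ β) ∂μ + μ (Ioi 1)
        + ENNReal.ofReal β * ∫⁻ u in Ico 1 R, μ (Ioi u) * ENNReal.ofReal (u ^ (β - 1)) := by
  have hone : ∫⁻ z in Ioi 0, ENNReal.ofReal (min z 1 ^ β) ∂μ
      = ∫⁻ z in Ioc 0 1, ENNReal.ofReal (z ^ β) ∂μ + μ (Ioi 1) := by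
    rw [← Ioc_union_Ioi_eq_Ioi zero_le_one, lintegral_union measurableSet_Ioi Ioc_disjoint_Ioi_same,
      ← setLIntegral_one (Ioi 1)]
    congr 1
    · exact setLIntegral_congr_fun measurableSet_Ioc fun z hz => by rw [min_eq_left hz.2]
    · exact setLIntegral_congr_fun measurableSet_Ioi fun z hz => by
        rw [min_eq_right (le_of_lt hz), Real.one_rpow, ENNReal.ofReal_one]
  rw [lintegral_Ioi_min_rpow μ (one_pos.trans_le hR) hβ, ← Ioo_union_Ico_eq_Ioo one_pos hR,
    lintegral_union measurableSet_Ico (disjoint_left.2 fun _ h h' => not_le.2 h.2 h'.1), mul_add,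
    ← lintegral_Ioi_min_rpow μ one_pos hβ, hone]

theorem lt_mul_rpow_neg_iff {r z s γ : ℝ} (hr : 0 < r) (hz : 0 ≤ z) (hs : 0 < s) (hγ : 0 < γ) :
    r < z * s ^ (-γ) ↔ s < (z / r) ^ γ⁻¹ := by
  have hsγ : 0 < s ^ γ := Real.rpow_pos_of_pos hs γ
  rw [Real.rpow_neg hs.le, ← div_eq_mul_inv, lt_div_iff₀ hsγ, ← lt_div_iff₀' hr,
    Real.lt_rpow_inv_iff_of_pos hs.le (div_nonneg hz hr.le) hγ]

theorem volume_Iio_inter_Ioc (m a b : ℝ) :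
    volume (Iio m ∩ Ioc a b) = ENNReal.ofReal (min m b - a) := by
  refine le_antisymm ?_ ?_
  · rw [← Real.volume_Ioc]
    exact measure_mono fun s hs => ⟨hs.2.1, le_min hs.1.le hs.2.2⟩
  · rw [← Real.volume_Ioo]
    exact measure_mono fun s hs =>
      ⟨(lt_min_iff.1 hs.2).1, hs.1, (lt_min_iff.1 hs.2).2.le⟩

theorem tauBar_eq_lintegral {d : ℕ} {α : ℝ} (hd : 0 < d) (hα : 0 < α) (t : ℝ) {r : ℝ}
    (hr : 0 < r) (lam : Measure ℝ) [SFinite lam] :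
    tauBar d α t lam r = ∫⁻ z in Ioi 0, ENNReal.ofReal (min ((z / r) ^ (α / d)) t) ∂lam := by
  have hγ : (0 : ℝ) < d / α := div_pos (Nat.cast_pos.2 hd) hα
  rw [tauBar, Measure.prod_apply_symm (measurableSet_lt measurable_const (by fun_prop))]
  refine setLIntegral_congr_fun measurableSet_Ioi fun z hz => ?_
  have hslice : (fun s => (s, z)) ⁻¹' {p : ℝ × ℝ | r < p.2 * p.1 ^ (-((d : ℝ) / α))} ∩ Ioc 0 t
      = Iio ((z / r) ^ (α / d)) ∩ Ioc 0 t := by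
    ext s
    simp only [mem_inter_iff, mem_preimage, mem_ofPred_eq, mem_Iio, and_congr_left_iff]
    intro hs
    rw [lt_mul_rpow_neg_iff hr (le_of_lt hz) hs.1 hγ, inv_div]
  rw [Measure.restrict_apply (measurable_prodMk_right (measurableSet_lt measurable_const
    (by fun_prop))), hslice, volume_Iio_inter_Ioc, sub_zero]

theorem tauBar_eq_mul_lintegral_min {d : ℕ} {α t r : ℝ} (hd : 0 < d) (hα : 0 < α) (ht : 0 < t)
    (hr : 0 < r) (lam : Measure ℝ) [SFinite lam] :
    tauBar d α t lam r = ENNReal.ofReal (r ^ (-(α / d)))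
      * ∫⁻ z in Ioi 0, ENNReal.ofReal (min z (t ^ (α / d)⁻¹ * r) ^ (α / d)) ∂lam := by
  set β : ℝ := α / d
  have hβ : 0 < β := div_pos hα (Nat.cast_pos.2 hd)
  set R := t ^ β⁻¹ * r
  have hRr : (R / r) ^ β = t := by
    rw [mul_div_cancel_right₀ _ hr.ne', ← Real.rpow_mul ht.le, inv_mul_cancel₀ hβ.ne',
      Real.rpow_one]
  have hscale : ∀ x, 0 ≤ x → (x / r) ^ β = r ^ (-β) * x ^ β := fun x hx => by
    rw [Real.div_rpow hx hr.le, Real.rpow_neg hr.le, div_eq_inv_mul]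
  rw [tauBar_eq_lintegral hd hα t hr, ← lintegral_const_mul' _ _ ENNReal.ofReal_ne_top]
  refine setLIntegral_congr_fun measurableSet_Ioi fun z hz => ?_
  have hR : 0 ≤ R := by positivity
  rw [← ENNReal.ofReal_mul (by positivity), ← hscale _ (le_min (le_of_lt hz) hR), ← hRr]
  congr 1
  rcases le_total z R with h | h
  · rw [min_eq_left h, min_eq_left]
    have : 0 ≤ z / r := div_nonneg (le_of_lt hz) hr.le
    gcongr
  · rw [min_eq_right h, min_eq_right]
    gcongr

section RegularlyVaryingTail

variable {lam : Measure ℝ} {l : ℝ → ℝ} {β : ℝ}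

theorem measure_Ioi_eq_ofReal (hl_pos : ∀ x, 0 < x → 0 < l x)
    (hlaml : ∀ r, 1 ≤ r → (lam (Ioi r)).toReal = l r / r ^ β) {u : ℝ} (hu : 1 ≤ u) :
    lam (Ioi u) = ENNReal.ofReal (l u / u ^ β) := by
  have hpos : 0 < (lam (Ioi u)).toReal := by
    rw [hlaml u hu]
    exact div_pos (hl_pos u (one_pos.trans_le hu)) (Real.rpow_pos_of_pos (one_pos.trans_le hu) β)
  rw [← hlaml u hu, ENNReal.ofReal_toReal (ENNReal.toReal_pos_iff.1 hpos).2.ne]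

theorem div_eq_div_rpow_mul_rpow_sub_one (l : ℝ → ℝ) (β : ℝ) {u : ℝ} (hu : 0 < u) :
    l u / u = l u / u ^ β * u ^ (β - 1) := by
  rw [Real.rpow_sub_one hu.ne', div_mul_div_comm, mul_comm, mul_div_mul_left _ _
    (Real.rpow_pos_of_pos hu β).ne']

theorem integrableOn_div_Icc (hl_pos : ∀ x, 0 < x → 0 < l x)
    (hlaml : ∀ r, 1 ≤ r → (lam (Ioi r)).toReal = l r / r ^ β) (b : ℝ) :
    IntegrableOn (fun u => l u / u) (Icc 1 b) := by
  have hpow : IntegrableOn (fun u : ℝ => u ^ (β - 1)) (Icc 1 b) :=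
    ContinuousOn.integrableOn_Icc fun u hu =>
      (Real.continuousAt_rpow_const _ _ (Or.inl (one_pos.trans_le hu.1).ne')).continuousWithinAt
  have htail : Measurable fun u => (lam (Ioi u)).toReal :=
    (Antitone.measurable fun _ _ h => measure_mono (Ioi_subset_Ioi h)).ennreal_toReal
  have hfin : lam (Ioi 1) ≠ ⊤ := by
    rw [measure_Ioi_eq_ofReal hl_pos hlaml le_rfl]
    exact ENNReal.ofReal_ne_top
  refine IntegrableOn.congr_fun (Integrable.bdd_mul hpow htail.aestronglyMeasurable
    (c := (lam (Ioi 1)).toReal) ?_) (fun u hu => ?_) measurableSet_Icc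
  · refine ae_restrict_of_forall_mem measurableSet_Icc fun u hu => ?_
    rw [Real.norm_of_nonneg ENNReal.toReal_nonneg]
    exact ENNReal.toReal_mono hfin (measure_mono (Ioi_subset_Ioi hu.1))
  · rw [hlaml u hu.1, div_eq_div_rpow_mul_rpow_sub_one l β (one_pos.trans_le hu.1)]

theorem lintegral_measure_Ioi_mul_rpow (hl_pos : ∀ x, 0 < x → 0 < l x)
    (hlaml : ∀ r, 1 ≤ r → (lam (Ioi r)).toReal = l r / r ^ β) {R : ℝ} (hR : 1 ≤ R) :
    ∫⁻ u in Ico 1 R, lam (Ioi u) * ENNReal.ofReal (u ^ (β - 1))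
      = ENNReal.ofReal (∫ u in (1 : ℝ)..R, l u / u) := by
  have hdiv : EqOn (fun u => lam (Ioi u) * ENNReal.ofReal (u ^ (β - 1)))
      (fun u => ENNReal.ofReal (l u / u)) (Ico 1 R) := fun u hu => by
    have hu0 : 0 < u := one_pos.trans_le hu.1
    dsimp only
    rw [measure_Ioi_eq_ofReal hl_pos hlaml hu.1,
      ← ENNReal.ofReal_mul (div_nonneg (hl_pos u hu0).le (Real.rpow_nonneg hu0.le β)),
      ← div_eq_div_rpow_mul_rpow_sub_one l β hu0]
  rw [setLIntegral_congr_fun measurableSet_Ico hdiv, ← ofReal_integral_eq_lintegral_ofReal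
    ((integrableOn_div_Icc hl_pos hlaml R).mono_set Ico_subset_Icc_self)
    (ae_restrict_of_forall_mem measurableSet_Ico fun u hu =>
      div_nonneg (hl_pos u (one_pos.trans_le hu.1)).le (one_pos.trans_le hu.1).le),
    intervalIntegral.integral_of_le hR, integral_Ico_eq_integral_Ioo,
    integral_Ioc_eq_integral_Ioo]

end RegularlyVaryingTail

section Asymptotics

variable {T w J : ℝ → ℝ} {K β : ℝ}

theorem tendsto_div_mul_const_add_of_tendsto {A c : ℝ} (hc : 0 < c) (hA : K + β * A ≠ 0)
    (hJ : Tendsto J atTop (𝓝 A)) (hT : ∀ᶠ r in atTop, T r = w r * (K + β * J (c * r)))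
    (hw : ∀ᶠ r in atTop, w r ≠ 0) :
    Tendsto (fun r => T r / (w r * (K + β * A))) atTop (𝓝 1) := by
  have hlim := (((hJ.comp (tendsto_id.const_mul_atTop hc)).const_mul β).const_add K).div_const
    (K + β * A)
  rw [div_self hA] at hlim
  refine hlim.congr' ?_
  filter_upwards [hT, hw] with r hTr hwr
  rw [hTr, mul_div_mul_left _ _ hwr, Function.comp_apply, id]

theorem tendsto_div_mul_of_tendsto_atTop (hK : 0 ≤ K) (hβ : 0 < β) (hJ : Tendsto J atTop atTop)
    (h : Tendsto (fun r => T r / (w r * (K + β * J r))) atTop (𝓝 1)) :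
    Tendsto (fun r => T r / (β * w r * J r)) atTop (𝓝 1) := by
  have hratio := ((tendsto_const_nhds (x := K)).div_atTop (hJ.const_mul_atTop hβ)).const_add 1
  rw [add_zero] at hratio
  refine (mul_one (1 : ℝ) ▸ h.mul hratio).congr' ?_
  filter_upwards [hJ.eventually_gt_atTop 0] with r hJr
  field_simp
  ring

end Asymptotics

theorem tauBar_toReal_eq {d : ℕ} {α t r : ℝ} {lam : Measure ℝ} [SFinite lam] {l : ℝ → ℝ}
    (hd : 0 < d) (hα : 0 < α) (ht : 0 < t) (hr : 0 < r) (hR : 1 ≤ t ^ (α / d)⁻¹ * r)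
    (hsmall : ∫⁻ z in Ioc 0 1, ENNReal.ofReal (z ^ (α / d)) ∂lam ≠ ⊤)
    (hl_pos : ∀ x, 0 < x → 0 < l x)
    (hlaml : ∀ r, 1 ≤ r → (lam (Ioi r)).toReal = l r / r ^ (α / d)) :
    (tauBar d α t lam r).toReal = r ^ (-(α / d)) *
      ((∫⁻ z in Ioc 0 1, ENNReal.ofReal (z ^ (α / d)) ∂lam).toReal + (lam (Ioi 1)).toReal
        + α / d * ∫ u in (1 : ℝ)..t ^ (α / d)⁻¹ * r, l u / u) := by
  have hβ : 0 < α / d := div_pos hα (Nat.cast_pos.2 hd)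
  have hJ : 0 ≤ ∫ u in (1 : ℝ)..t ^ (α / d)⁻¹ * r, l u / u :=
    intervalIntegral.integral_nonneg hR fun u hu =>
      div_nonneg (hl_pos u (one_pos.trans_le hu.1)).le (one_pos.trans_le hu.1).le
  have hfin : lam (Ioi 1) ≠ ⊤ := by
    rw [measure_Ioi_eq_ofReal hl_pos hlaml le_rfl]
    exact ENNReal.ofReal_ne_top
  rw [tauBar_eq_mul_lintegral_min hd hα ht hr, lintegral_Ioi_min_rpow_eq_add lam hR hβ,
    lintegral_measure_Ioi_mul_rpow hl_pos hlaml hR, ← ENNReal.ofReal_mul hβ.le,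
    ENNReal.toReal_mul, ENNReal.toReal_add (ENNReal.add_ne_top.2 ⟨hsmall, hfin⟩)
      ENNReal.ofReal_ne_top, ENNReal.toReal_add hsmall hfin, ENNReal.toReal_ofReal (by positivity),
    ENNReal.toReal_ofReal (by positivity)]

theorem stmt4_general (d : ℕ) (hd : 1 ≤ d) (α : ℝ) (hα : α ∈ Set.Ioo (0:ℝ) 2) (t : ℝ) (ht : 0 < t)
    (lam : MeasureTheory.Measure ℝ) [SigmaFinite lam]
    (hsmall : ∫⁻ z in Set.Ioc (0:ℝ) 1, ENNReal.ofReal (z ^ (α / (d:ℝ))) ∂lam ≠ ⊤)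
    (l : ℝ → ℝ) (hl : SlowlyVarying l) (hl_pos : ∀ x : ℝ, 0 < x → 0 < l x)
    (hlaml : ∀ r : ℝ, 1 ≤ r → (lam (Set.Ioi r)).toReal = l r / r ^ (α / (d:ℝ))) :
    Filter.Tendsto
      (fun r : ℝ => (tauBar d α t lam r).toReal /
        (r ^ (-(α / (d:ℝ))) *
          ((∫⁻ z in Set.Ioc (0:ℝ) 1, ENNReal.ofReal (z ^ (α / (d:ℝ))) ∂lam).toReal
            + (lam (Set.Ioi (1:ℝ))).toReal
            + α / (d:ℝ) * ∫ u in (1:ℝ)..r, l u / u)))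
      Filter.atTop (nhds 1) ∧
    (MeasureTheory.IntegrableOn (fun u => l u / u) (Set.Ioi (1:ℝ)) MeasureTheory.volume →
      Filter.Tendsto
        (fun r : ℝ => (tauBar d α t lam r).toReal /
          (r ^ (-(α / (d:ℝ))) *
            ((∫⁻ z in Set.Ioc (0:ℝ) 1, ENNReal.ofReal (z ^ (α / (d:ℝ))) ∂lam).toReal
              + (lam (Set.Ioi (1:ℝ))).toReal
              + α / (d:ℝ) * ∫ u in Set.Ioi (1:ℝ), l u / u)))
        Filter.atTop (nhds 1)) ∧
    (¬ MeasureTheory.IntegrableOn (fun u => l u / u) (Set.Ioi (1:ℝ)) MeasureTheory.volume →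
      Filter.Tendsto
        (fun r : ℝ => (tauBar d α t lam r).toReal /
          (α / (d:ℝ) * r ^ (-(α / (d:ℝ))) * ∫ u in (1:ℝ)..r, l u / u))
        Filter.atTop (nhds 1)) := by
  have hβ : 0 < α / (d : ℝ) := div_pos hα.1 (Nat.cast_pos.2 hd)
  set β := α / (d : ℝ)
  set K := (∫⁻ z in Ioc 0 1, ENNReal.ofReal (z ^ β) ∂lam).toReal + (lam (Ioi 1)).toReal
  have hK : 0 < K := add_pos_of_nonneg_of_pos ENNReal.toReal_nonneg (by
    rw [hlaml 1 le_rfl, Real.one_rpow, div_one]; exact hl_pos 1 one_pos)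
  have hg0 : ∀ u : ℝ, 1 ≤ u → 0 ≤ l u / u := fun u hu =>
    div_nonneg (hl_pos u (one_pos.trans_le hu)).le (one_pos.trans_le hu).le
  have hint := integrableOn_div_Icc hl_pos hlaml
  have hc : 0 < t ^ β⁻¹ := Real.rpow_pos_of_pos ht _
  have hτ : ∀ᶠ r in atTop, (tauBar d α t lam r).toReal
      = r ^ (-β) * (K + β * ∫ u in (1 : ℝ)..t ^ β⁻¹ * r, l u / u) := by
    filter_upwards [eventually_ge_atTop (t ^ β⁻¹)⁻¹, eventually_gt_atTop 0] with r hr hr0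
    exact tauBar_toReal_eq hd hα.1 ht hr0 ((inv_le_iff_one_le_mul₀' hc).1 hr) hsmall hl_pos hlaml
  have hw : ∀ᶠ r : ℝ in atTop, r ^ (-β) ≠ 0 :=
    (eventually_gt_atTop 0).mono fun r hr => (Real.rpow_pos_of_pos hr _).ne'
  have hmain : Tendsto (fun r => (tauBar d α t lam r).toReal /
      (r ^ (-β) * (K + β * ∫ u in (1 : ℝ)..r, l u / u))) atTop (𝓝 1) := by
    refine (hl.const_add_mul_integral hl_pos hint hK hβ.le _ hc).congr' ?_
    filter_upwards [hτ, hw] with r hτr hwr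
    rw [hτr, mul_div_mul_left _ _ hwr]
  refine ⟨hmain, fun hconv => ?_, fun hdiv => ?_⟩
  · refine tendsto_div_mul_const_add_of_tendsto hc (add_pos_of_pos_of_nonneg hK (mul_nonneg hβ.le
      (setIntegral_nonneg measurableSet_Ioi fun u hu => hg0 u (le_of_lt hu)))).ne'
      (intervalIntegral_tendsto_integral_Ioi 1 hconv tendsto_id) hτ hw
  · exact tendsto_div_mul_of_tendsto_atTop hK.le hβ
      (tendsto_intervalIntegral_atTop_of_not_integrableOn hg0 hint hdiv) hmain

theorem stmt4 (d : ℕ) (hd : 1 ≤ d) (α : ℝ) (hα : α ∈ Set.Ioo (0:ℝ) 2) (t : ℝ) (ht : 0 < t)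
    (lam : MeasureTheory.Measure ℝ) [SigmaFinite lam]
    (hlam0 : lam (Set.Iic 0) = 0) (hlam_ne : lam ≠ 0)
    (hmom : ∫⁻ z in Set.Ioi (0:ℝ), ENNReal.ofReal (min 1 (z ^ 2)) ∂lam ≠ ⊤)
    (hsmall : ∫⁻ z in Set.Ioc (0:ℝ) 1, ENNReal.ofReal (z ^ (α / (d:ℝ))) ∂lam ≠ ⊤)
    (l : ℝ → ℝ) (hl : SlowlyVarying l) (hl_pos : ∀ x : ℝ, 0 < x → 0 < l x)
    (hlaml : ∀ r : ℝ, 1 ≤ r → (lam (Set.Ioi r)).toReal = l r / r ^ (α / (d:ℝ))) :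
    Filter.Tendsto
      (fun r : ℝ => (tauBar d α t lam r).toReal /
        (r ^ (-(α / (d:ℝ))) *
          ((∫⁻ z in Set.Ioc (0:ℝ) 1, ENNReal.ofReal (z ^ (α / (d:ℝ))) ∂lam).toReal
            + (lam (Set.Ioi (1:ℝ))).toReal
            + α / (d:ℝ) * ∫ u in (1:ℝ)..r, l u / u)))
      Filter.atTop (nhds 1) ∧
    (MeasureTheory.IntegrableOn (fun u => l u / u) (Set.Ioi (1:ℝ)) MeasureTheory.volume →
      Filter.Tendsto
        (fun r : ℝ => (tauBar d α t lam r).toReal /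
          (r ^ (-(α / (d:ℝ))) *
            ((∫⁻ z in Set.Ioc (0:ℝ) 1, ENNReal.ofReal (z ^ (α / (d:ℝ))) ∂lam).toReal
              + (lam (Set.Ioi (1:ℝ))).toReal
              + α / (d:ℝ) * ∫ u in Set.Ioi (1:ℝ), l u / u)))
        Filter.atTop (nhds 1)) ∧
    (¬ MeasureTheory.IntegrableOn (fun u => l u / u) (Set.Ioi (1:ℝ)) MeasureTheory.volume →
      Filter.Tendsto
        (fun r : ℝ => (tauBar d α t lam r).toReal /
          (α / (d:ℝ) * r ^ (-(α / (d:ℝ))) * ∫ u in (1:ℝ)..r, l u / u))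
        Filter.atTop (nhds 1)) :=
  stmt4_general d hd α hα t ht lam hsmall l hl hl_pos hlaml
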